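/- Compression Lemma (affine form). Suppose h ∈ Isom⁰(E) is an ε-hyperbolic affine isometry with linear part g. Then for all δ > 0 and all x ∈ E, the set B(h(x), δε/4) ∩ E^{wu}_{h(x)}(g) is contained in h(B(x, δ)). -/

import Mathlib

noncomputable section

open Set

/-- The underlying vector space ℝ^{2,1} of Minkowski (2+1)-space `E`. -/
abbrev V : Type := Fin 3 → ℝ

/-- The Lorentzian inner product `B` of signature (2,1). -/
def mB (u v : V) : ℝ := u 0 * v 0 + u 1 * v 1 - u 2 * v 2

def Timelike (v : V) : Prop := mB v v < 0

def UnitSpacelike (v : V) : Prop := mB v v = 1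

/-- future-pointing timelike vector. -/
def FutureTimelike (v : V) : Prop := mB v v < 0 ∧ 0 < v 2

/-- The standard Euclidean norm on ℝ³. -/
def eunorm (v : V) : ℝ := Real.sqrt (v 0 ^ 2 + v 1 ^ 2 + v 2 ^ 2)

/-- The Euclidean distance ρ. -/
def ρ (p q : V) : ℝ := eunorm (p - q)

/-- Open Euclidean ball `B(x,δ)`. -/
def eball (x : V) (δ : ℝ) : Set V := {y | ρ x y < δ}

/-- Euclidean δ-neighborhood `B(S,δ)` of a set `S`. -/
def nbhd (S : Set V) (δ : ℝ) : Set V := {y | ∃ x ∈ S, ρ x y < δ}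

/-- Membership in SO⁰(2,1): a linear isometry of `B` preserving orientation
(det = 1) and time-orientation (the future cone); this characterizes the
identity component of the group of linear isometries of `B`. -/
def InSO (g : V ≃ₗ[ℝ] V) : Prop :=
  (∀ u v : V, mB (g u) (g v) = mB u v) ∧
  LinearMap.det g.toLinearMap = 1 ∧
  ∀ v : V, FutureTimelike v → FutureTimelike (g v)

/-- Membership in Isom⁰(E) = SO⁰(2,1) ⋉ ℝ³. -/
def InIsom (φ : V ≃ᵃ[ℝ] V) : Prop := InSO φ.linear

/-- The point `u_φ = (cos φ, sin φ, 1)` on the circle S¹ of future-pointing null vectors. -/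
def uph (φ : ℝ) : V := ![Real.cos φ, Real.sin φ, 1]

/-- The circle S¹ of future-pointing null vectors. -/
def circ : Set V := {u | ∃ φ : ℝ, u = uph φ}

/-- An interval (arc) `{u_φ : φ₁ < φ < φ₂}` on S¹. -/
def arc (φ₁ φ₂ : ℝ) : Set V := {u | ∃ φ : ℝ, φ₁ < φ ∧ φ < φ₂ ∧ u = uph φ}

/-- Radial projection of a future-pointing null vector back onto S¹ (divide by third
coordinate); `u ↦ nproj (g u)` is the induced action `P(g)` of `g` on S¹. -/
def nproj (w : V) : V := (w 2)⁻¹ • w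

/-- `(a,b,c)` is a positively oriented basis of ℝ³. -/
def PosOriented (a b c : V) : Prop := 0 < Matrix.det (Matrix.of ![a, b, c])

/-- `xm = x⁻(v)`, `xp = x⁺(v)`: the two points of S¹ which are B-orthogonal to the
unit-spacelike vector `v`, labeled so that `(x⁻(v), x⁺(v), v)` is positively oriented. -/
def IsNullFrame (v xm xp : V) : Prop :=
  xm ∈ circ ∧ xp ∈ circ ∧ mB xm v = 0 ∧ mB xp v = 0 ∧ xm ≠ xp ∧ PosOriented xm xp v

/-- Eigendata of a hyperbolic element of SO⁰(2,1): `xm = x⁻(g)` and `xp = x⁺(g)` are the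
eigenvectors on S¹ with eigenvalues `lam < 1 < lam⁻¹`. -/
def IsHypData (g : V ≃ₗ[ℝ] V) (lam : ℝ) (xm xp : V) : Prop :=
  0 < lam ∧ lam < 1 ∧ xm ∈ circ ∧ xp ∈ circ ∧ g xm = lam • xm ∧ g xp = lam⁻¹ • xp

/-- `g` is hyperbolic: it has eigenvalues `lam < 1 < lam⁻¹` with null eigenvectors on S¹. -/
def IsHyperbolic (g : V ≃ₗ[ℝ] V) : Prop := ∃ lam xm xp, IsHypData g lam xm xp

/-- `g` is ε-hyperbolic: it is hyperbolic and `ρ(x⁺(g), x⁻(g)) ≥ ε`. -/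
def EpsHyperbolic (g : V ≃ₗ[ℝ] V) (ε : ℝ) : Prop :=
  ∃ lam xm xp, IsHypData g lam xm xp ∧ ε ≤ ρ xp xm

/-- Hyperbolic 2-space H² (hyperboloid model: the set of future unit timelike vectors,
the canonical section of the set of timelike lines). -/
def Hyp : Set V := {v | mB v v = -1 ∧ 0 < v 2}

/-- The origin `O ∈ H²`. -/
def Opt : V := ![0, 0, 1]

/-- Hyperbolic distance on H² (arcosh of |B(x,y)| for normalized x, y). -/
def hdist (x y : V) : ℝ := Real.log (|mB x y| + Real.sqrt (mB x y ^ 2 - 1))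

/-- The half-plane `H_v ⊂ H²` determined by a unit-spacelike vector `v`. -/
def halfPlane (v : V) : Set V := {u | u ∈ Hyp ∧ 0 < mB u v}

/-- The geodesic `l_v ⊂ H²` determined by a unit-spacelike vector `v`. -/
def geo (v : V) : Set V := {u | u ∈ Hyp ∧ mB u v = 0}

/-- The crooked plane `C₀` with vertex the origin directed by `e₁ = (1,0,0)`. -/
def C0 : Set V :=
  {u | u 0 = 0 ∧ |u 1| ≤ |u 2|} ∪
  {u | u 0 ≤ 0 ∧ u 1 = u 2} ∪
  {u | 0 ≤ u 0 ∧ u 1 = -u 2}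

/-- The open crooked half-space `H₀` bounded by `C₀`. -/
def H0 : Set V :=
  {u | 0 < u 0 ∧ 0 < u 1 + u 2} ∪
  {u | u 0 = 0 ∧ 0 < u 1 + u 2 ∧ 0 < u 2 - u 1} ∪
  {u | u 0 < 0 ∧ 0 < u 2 - u 1}

/-- `S` is a crooked plane `C(u,p) = p + g(C₀)` for some `g ∈ SO⁰(2,1)`. -/
def IsCrookedPlane (S : Set V) : Prop :=
  ∃ (g : V ≃ₗ[ℝ] V) (p : V), InSO g ∧ S = (fun x => p + g x) '' C0

/-- `H` is a crooked half-space `H(u,p) = p + g(H₀)` for some `g ∈ SO⁰(2,1)`. -/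
def IsCrookedHalfSpace (H : Set V) : Prop :=
  ∃ (g : V ≃ₗ[ℝ] V) (p : V), InSO g ∧ H = (fun x => p + g x) '' H0

/-- Signed generator: `g^+ = g`, `g^- = g⁻¹` (Bool `true` = `+`, `false` = `−`). -/
def sgen {G : Type*} [Group G] (g : G) (j : Bool) : G := if j then g else g⁻¹

/-- A word `w 0, …, w l` in the letters `(i,j)` (meaning `h_i^j`) is reduced:
`(i_{k+1}, j_{k+1}) ≠ (i_k, −j_k)` for all `k < l`. -/
def ReducedWord {m : ℕ} (l : ℕ) (w : ℕ → Fin m × Bool) : Prop :=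
  ∀ k, k < l → ¬((w (k + 1)).1 = (w k).1 ∧ (w (k + 1)).2 = !(w k).2)

/-- An affine Schottky configuration. -/
structure AffSchottky (m : ℕ) where
  hm : 2 ≤ m
  h : Fin m → V ≃ᵃ[ℝ] V
  hIsom : ∀ i, InIsom (h i)
  H : Fin m → Bool → Set V
  hCrooked : ∀ i j, IsCrookedHalfSpace (H i j)
  hDisj : ∀ i j i' j', (i, j) ≠ (i', j') → Disjoint (H i j) (H i' j')
  hPair : ∀ i, ⇑(h i) '' H i false = (closure (H i true))ᶜ

namespace AffSchottky

variable {m : ℕ} (S : AffSchottky m)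

/-- The crooked polyhedron `X = E − ⋃ closure(H_i^j)`. -/
def X : Set V := (⋃ i, ⋃ j, closure (S.H i j))ᶜ

/-- The affine Schottky group Γ generated by `h₁, …, h_m`. -/
def Γ : Subgroup (V ≃ᵃ[ℝ] V) := Subgroup.closure (Set.range S.h)

/-- The signed generators `h_i^j`. -/
def hp (i : Fin m) (j : Bool) : V ≃ᵃ[ℝ] V := sgen (S.h i) j

/-- `wprod w k = h_{i₀}^{j₀} ⋯ h_{i_{k-1}}^{j_{k-1}}` where `w t = (i_t, j_t)`. -/
def wprod (w : ℕ → Fin m × Bool) (k : ℕ) : V ≃ᵃ[ℝ] V :=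
  ((List.range k).map fun t => S.hp (w t).1 (w t).2).prod

end AffSchottky

/-- A (linear) Schottky configuration. -/
structure LinSchottky (m : ℕ) where
  hm : 2 ≤ m
  g : Fin m → V ≃ₗ[ℝ] V
  hSO : ∀ i, InSO (g i)
  a : Fin m → Bool → ℝ
  b : Fin m → Bool → ℝ
  hab : ∀ i j, a i j < b i j ∧ b i j - a i j < 2 * Real.pi
  hDisjCl : ∀ i j i' j', (i, j) ≠ (i', j') →
    Disjoint (closure (arc (a i j) (b i j))) (closure (arc (a i' j') (b i' j')))
  hPair : ∀ i, (fun u => nproj (g i u)) '' arc (a i false) (b i false) =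
    circ \ closure (arc (a i true) (b i true))
  hPairInv : ∀ i, (fun u => nproj ((g i)⁻¹ u)) '' arc (a i true) (b i true) =
    circ \ closure (arc (a i false) (b i false))

namespace LinSchottky

variable {m : ℕ} (S : LinSchottky m)

/-- The intervals `A_i^j ⊂ S¹`. -/
def A (i : Fin m) (j : Bool) : Set V := arc (S.a i j) (S.b i j)

/-- The Schottky group `G` generated by `g₁, …, g_m`. -/
def G : Subgroup (V ≃ₗ[ℝ] V) := Subgroup.closure (Set.range S.g)

/-- The signed generators `g_i^j`. -/
def gp (i : Fin m) (j : Bool) : V ≃ₗ[ℝ] V := sgen (S.g i) j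

/-- `wprod w k = g_{i₀}^{j₀} ⋯ g_{i_{k-1}}^{j_{k-1}}` where `w t = (i_t, j_t)`. -/
def wprod (w : ℕ → Fin m × Bool) (k : ℕ) : V ≃ₗ[ℝ] V :=
  ((List.range k).map fun t => S.gp (w t).1 (w t).2).prod

end LinSchottky

/-- Given directing unit-spacelike vectors `v i j` of the half-planes `H_i^j`, the
fundamental polygon `Δ = H² − ⋃ closure(H_i^j)` (closures taken in H²). -/
def linΔ {m : ℕ} (v : Fin m → Bool → V) : Set V :=
  Hyp \ ⋃ i, ⋃ j, Hyp ∩ closure (halfPlane (v i j))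

/-!
Write a point of `h(x) + E^{wu}(g)` as `h(x) + a x⁰ + b x⁺`; its preimage is `x + a x⁰ + λ b x⁺`,
a point of the segment from `x + a x⁰` to `x + a x⁰ + b x⁺`. The Euclidean norm exceeds the
Lorentzian one by `2 w₂²`, so `|a| ≤ ‖a x⁰ + b x⁺‖` and `1 ≤ ‖x⁰‖`; by convexity of the norm the
preimage therefore lies within `‖x⁰‖ ‖a x⁰ + b x⁺‖` of `x`. Finally `x⁰` is B-orthogonal to both
`x⁻` and `x⁺`, which forces `‖x⁰‖ ρ(x⁺, x⁻) ≤ 2√2 < 4`.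
-/

lemma eunorm_eq_norm (v : V) : eunorm v = ‖WithLp.toLp 2 v‖ := by
  simp [eunorm, EuclideanSpace.norm_eq, Fin.sum_univ_three]

lemma eunorm_nonneg (v : V) : 0 ≤ eunorm v := Real.sqrt_nonneg _

lemma eunorm_add_le (v w : V) : eunorm (v + w) ≤ eunorm v + eunorm w := by
  simpa only [eunorm_eq_norm, WithLp.toLp_add] using norm_add_le _ _

lemma eunorm_smul (c : ℝ) (v : V) : eunorm (c • v) = |c| * eunorm v := by
  simp only [eunorm_eq_norm, WithLp.toLp_smul, norm_smul, Real.norm_eq_abs]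

lemma ρ_self_add (p w : V) : ρ p (p + w) = eunorm w := by
  rw [ρ, sub_add_cancel_left, ← neg_one_smul ℝ w, eunorm_smul, abs_neg, abs_one, one_mul]

lemma eunorm_sq (v : V) : eunorm v ^ 2 = mB v v + 2 * v 2 ^ 2 := by
  rw [eunorm, Real.sq_sqrt (by positivity), mB]
  ring

lemma mB_le_eunorm_sq (v : V) : mB v v ≤ eunorm v ^ 2 := by
  rw [eunorm_sq]
  nlinarith [sq_nonneg (v 2)]

lemma mB_smul_right (c : ℝ) (u v : V) : mB u (c • v) = c * mB u v := by
  simp only [mB, Pi.smul_apply, smul_eq_mul]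
  ring

lemma mB_smul_add_smul_self (a b : ℝ) (u v : V) :
    mB (a • u + b • v) (a • u + b • v) = a ^ 2 * mB u u + 2 * a * b * mB u v + b ^ 2 * mB v v := by
  simp only [mB, Pi.add_apply, Pi.smul_apply, smul_eq_mul]
  ring

lemma mB_uph_self (φ : ℝ) : mB (uph φ) (uph φ) = 0 := by
  simp [mB, uph, ← sq, Real.cos_sq_add_sin_sq]

lemma ρ_uph_sq (α β : ℝ) : ρ (uph α) (uph β) ^ 2 = -2 * mB (uph α) (uph β) := by
  rw [ρ, eunorm_sq]
  simp only [mB, uph, Pi.sub_apply, Matrix.cons_val_zero, Matrix.cons_val_one,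
    Matrix.cons_val_two, Matrix.head_cons, Matrix.tail_cons]
  nlinarith [Real.cos_sq_add_sin_sq α, Real.cos_sq_add_sin_sq β]

lemma mB_eq_zero_of_eigenvector {g : V → V} (hg : ∀ u v, mB (g u) (g v) = mB u v) {v u : V}
    {c : ℝ} (hv : g v = v) (hu : g u = c • u) (hc : c ≠ 1) : mB v u = 0 := by
  have h := hg v u
  rw [hv, hu, mB_smul_right] at h
  have : (c - 1) * mB v u = 0 := by linear_combination h
  exact (mul_eq_zero.1 this).resolve_left (sub_ne_zero.2 hc)

/-- In the plane, `p = (v₀, v₁)` has `|p|² = 1 + v₂²` and `p · e = v₂` for the unit vectors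
`e = (cos φ, sin φ)` of both angles, so `p × e = ±1`; then
`|p|² (e_α · e_β) = v₂² + (p × e_α)(p × e_β) ≥ v₂² - 1`. -/
lemma one_add_sq_mul_neg_mB_uph_le {v : V} {α β : ℝ} (hv : mB v v = 1)
    (hα : mB v (uph α) = 0) (hβ : mB v (uph β) = 0) :
    (1 + v 2 ^ 2) * -mB (uph α) (uph β) ≤ 2 := by
  simp only [mB, uph, Matrix.cons_val_zero, Matrix.cons_val_one, Matrix.cons_val_two,
    Matrix.head_cons, Matrix.tail_cons] at hv hα hβ ⊢
  set X := v 0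
  set Y := v 1
  set Z := v 2
  have hcrossα : (Y * Real.cos α - X * Real.sin α) ^ 2 = 1 := by
    linear_combination (X ^ 2 + Y ^ 2) * Real.cos_sq_add_sin_sq α + hv
      - (X * Real.cos α + Y * Real.sin α + Z) * hα
  have hcrossβ : (Y * Real.cos β - X * Real.sin β) ^ 2 = 1 := by
    linear_combination (X ^ 2 + Y ^ 2) * Real.cos_sq_add_sin_sq β + hv
      - (X * Real.cos β + Y * Real.sin β + Z) * hβ
  have hdot : (1 + Z ^ 2) * -(Real.cos α * Real.cos β + Real.sin α * Real.sin β - 1 * 1)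
      = 1 - (Y * Real.cos α - X * Real.sin α) * (Y * Real.cos β - X * Real.sin β) := by
    linear_combination (Real.cos α * Real.cos β + Real.sin α * Real.sin β) * hv
      - (X * Real.cos β + Y * Real.sin β) * hα - Z * hβ
  rw [hdot]
  nlinarith [sq_nonneg ((Y * Real.cos α - X * Real.sin α) + (Y * Real.cos β - X * Real.sin β))]

lemma eunorm_mul_ρ_uph_lt_four {v : V} {α β : ℝ} (hv : mB v v = 1)
    (hα : mB v (uph α) = 0) (hβ : mB v (uph β) = 0) :
    eunorm v * ρ (uph α) (uph β) < 4 := by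
  have hbound := one_add_sq_mul_neg_mB_uph_le hv hα hβ
  have hρ := ρ_uph_sq α β
  have hsq : (eunorm v * ρ (uph α) (uph β)) ^ 2 ≤ 8 := by
    rw [mul_pow, hρ, eunorm_sq, hv]
    nlinarith [sq_nonneg (ρ (uph α) (uph β)), sq_nonneg (v 2)]
  nlinarith

lemma one_le_eunorm {v : V} (hv : mB v v = 1) : 1 ≤ eunorm v := by
  nlinarith [mB_le_eunorm_sq v, eunorm_nonneg v]

lemma eunorm_smul_add_mul_smul_le {v u : V} (hv : mB v v = 1) (hvu : mB v u = 0)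
    (hu : mB u u = 0) (a b : ℝ) {t : ℝ} (ht₀ : 0 ≤ t) (ht₁ : t ≤ 1) :
    eunorm (a • v + (t * b) • u) ≤ eunorm v * eunorm (a • v + b • u) := by
  set w := a • v + b • u
  have ha : |a| ≤ eunorm w := by
    have h := mB_le_eunorm_sq w
    rw [mB_smul_add_smul_self, hv, hvu, hu] at h
    rw [← abs_of_nonneg (eunorm_nonneg w)]
    exact sq_le_sq.1 (by linarith)
  have hv₁ := one_le_eunorm hv
  have hcomb : a • v + (t * b) • u = (1 - t) • (a • v) + t • w := by
    simp only [w, smul_add, smul_smul]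
    module
  calc eunorm (a • v + (t * b) • u)
      ≤ (1 - t) * (|a| * eunorm v) + t * eunorm w := by
        rw [hcomb]
        refine (eunorm_add_le _ _).trans (le_of_eq ?_)
        rw [eunorm_smul, eunorm_smul, eunorm_smul, abs_of_nonneg (sub_nonneg.2 ht₁),
          abs_of_nonneg ht₀]
    _ ≤ (1 - t) * (eunorm w * eunorm v) + t * (eunorm v * eunorm w) := by
        have hw₀ := eunorm_nonneg w
        gcongr (1 - t) * ?_ + t * ?_
        · exact mul_le_mul ha (le_refl _) (eunorm_nonneg v) hw₀
        · exact le_mul_of_one_le_left hw₀ hv₁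
    _ = eunorm v * eunorm w := by ring

lemma AffineEquiv.apply_add_eq {k W : Type*} [Ring k] [AddCommGroup W] [Module k W]
    (h : W ≃ᵃ[k] W) (x v : W) : h (x + v) = h x + h.linear v := by
  rw [add_comm x, ← vadd_eq_add, h.map_vadd, vadd_eq_add, add_comm]

theorem stmt5_general (h : V ≃ᵃ[ℝ] V) (hh : InIsom h) (lam : ℝ) (xm xp x0 : V)
    (hd : IsHypData h.linear lam xm xp) (hx0 : UnitSpacelike x0)
    (hgx0 : h.linear x0 = x0)
    (ε : ℝ) (hε : ε ≤ ρ xp xm) (δ : ℝ) (hδ : 0 < δ) (x : V) :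
    eball (h x) (δ * ε / 4) ∩
        ((fun u => h x + u) '' (Submodule.span ℝ ({x0, xp} : Set V) : Set V)) ⊆
      ⇑h '' eball x δ := by
  obtain ⟨hlam₀, hlam₁, ⟨β, rfl⟩, ⟨α, rfl⟩, hxm, hxp⟩ := hd
  have hx0m : mB x0 (uph β) = 0 := mB_eq_zero_of_eigenvector hh.1 hgx0 hxm hlam₁.ne
  have hx0p : mB x0 (uph α) = 0 :=
    mB_eq_zero_of_eigenvector hh.1 hgx0 hxp (one_lt_inv₀ hlam₀ |>.2 hlam₁).ne'
  have hx0ε : eunorm x0 * ε < 4 :=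
    lt_of_le_of_lt (by gcongr; exact eunorm_nonneg x0) (eunorm_mul_ρ_uph_lt_four hx0 hx0p hx0m)
  rintro _ ⟨hy, w, hw, rfl⟩
  obtain ⟨a, b, rfl⟩ := Submodule.mem_span_pair.1 hw
  refine ⟨x + (a • x0 + (lam * b) • uph α), ?_, ?_⟩
  · have hy' : eunorm (a • x0 + b • uph α) < δ * ε / 4 := by simpa [eball, ρ_self_add] using hy
    have hx0pos : 0 < eunorm x0 := zero_lt_one.trans_le (one_le_eunorm hx0)
    calc ρ x (x + (a • x0 + (lam * b) • uph α))
        ≤ eunorm x0 * eunorm (a • x0 + b • uph α) := by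
          rw [ρ_self_add]
          exact eunorm_smul_add_mul_smul_le hx0 hx0p (mB_uph_self α) a b hlam₀.le hlam₁.le
      _ < eunorm x0 * (δ * ε / 4) := by gcongr
      _ < δ := by nlinarith
  · rw [AffineEquiv.apply_add_eq, map_add, map_smul, map_smul, hgx0, hxp, smul_smul,
      mul_comm lam, mul_assoc, mul_inv_cancel₀ hlam₀.ne', mul_one]

/-- Compression Lemma (affine form). If `h ∈ Isom⁰(E)` is an ε-hyperbolic affine
isometry with linear part `g`, then for all `δ > 0` and `x ∈ E`,
`B(h(x), δε/4) ∩ E^{wu}_{h(x)}(g) ⊆ h(B(x, δ))`. -/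
theorem stmt5 (h : V ≃ᵃ[ℝ] V) (hh : InIsom h) (lam : ℝ) (xm xp x0 : V)
    (hd : IsHypData h.linear lam xm xp) (hx0 : UnitSpacelike x0)
    (hgx0 : h.linear x0 = x0) (hor : PosOriented xm xp x0)
    (ε : ℝ) (hε : ε ≤ ρ xp xm) (δ : ℝ) (hδ : 0 < δ) (x : V) :
    eball (h x) (δ * ε / 4) ∩
        ((fun u => h x + u) '' (Submodule.span ℝ ({x0, xp} : Set V) : Set V)) ⊆
      ⇑h '' eball x δ :=
  stmt5_general h hh lam xm xp x0 hd hx0 hgx0 ε hε δ hδ x
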